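/- arXiv:1907.08559 — 8 statements merged into one kernel-verified Lean document; each statement's English description precedes it below -/
import Mathlib

section
/- The limit superior as k → ∞ of ĝ(k+1)/ĝ(k) is infinite; equivalently, for every real M there exist infinitely many integers k ≥ 2 with ĝ(k+1)/ĝ(k) > M. -/
open Finset Filter Real Asymptotics

/-- `digit i p k` is the `i`-th digit of `k` in base `p`, i.e. `⌊k / p^i⌋ mod p`. -/
def digit (i p k : ℕ) : ℕ := (k / p ^ i) % p

/-- `Mk k = ∏_{p ≤ k, p prime} p^(⌊log_p k⌋ + 1)`. -/
def Mk (k : ℕ) : ℕ :=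
  ∏ p ∈ (Finset.range (k + 1)).filter Nat.Prime, p ^ (Nat.log p k + 1)

/-- `Rk k = ∏_{p ≤ k, p prime} ∏_{i=0}^{⌊log_p k⌋} (p − a_{i,p}(k))`. -/
def Rk (k : ℕ) : ℕ :=
  ∏ p ∈ (Finset.range (k + 1)).filter Nat.Prime,
    ∏ i ∈ Finset.range (Nat.log p k + 1), (p - digit i p k)

/-- The heuristic estimate `ĝ(k) = M_k / R_k` for the Erdős–Selfridge function. -/
def ghat (k : ℕ) : ℚ := (Mk k : ℚ) / (Rk k : ℚ)

/-!
If `p = n + 1` is prime, then for every prime `q < p` the step from `n` to `p` raises the last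
base-`q` digit by one without a carry, while the prime `p` itself enters `M` and `R` with the
factors `p ^ 2` and `p (p - 1)`. So `ĝ(p) / ĝ(n)` is `p / n` times a product over the primes
`q < p` of `(q - d_q) / (q - d_q - 1)`, where `d_q` is the last base-`q` digit of `n`; each factor
is at least `1`, and it equals `q / (q - 1)` when `q ∣ n`. As `∑ 1 / q` diverges,
`∏ q / (q - 1)` over a finite set `S` of primes exceeds any bound, and the primes `p ≡ 1`
modulo `∏ S` (an elementary case of Dirichlet's theorem) supply infinitely many such `n`.
-/

lemma Finset.one_add_sum_le_prod_one_add {ι R : Type*} [CommSemiring R] [PartialOrder R]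
    [IsOrderedRing R] (s : Finset ι) {f : ι → R} (hf : ∀ i ∈ s, 0 ≤ f i) :
    1 + ∑ i ∈ s, f i ≤ ∏ i ∈ s, (1 + f i) := by
  classical
  induction s using Finset.induction_on with
  | empty => simp
  | insert a s ha ih =>
    rw [prod_insert ha, sum_insert ha]
    have ih := ih fun i hi => hf i (mem_insert_of_mem hi)
    have hfa := hf a (mem_insert_self a s)
    have hs := sum_nonneg fun i hi => hf i (mem_insert_of_mem hi)
    calc 1 + (f a + ∑ i ∈ s, f i) ≤ 1 + (f a + ∑ i ∈ s, f i) + f a * ∑ i ∈ s, f i :=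
          le_add_of_nonneg_right (mul_nonneg hfa hs)
      _ = (1 + f a) * (1 + ∑ i ∈ s, f i) := by ring
      _ ≤ (1 + f a) * ∏ i ∈ s, (1 + f i) :=
          mul_le_mul_of_nonneg_left ih (add_nonneg zero_le_one hfa)

lemma Nat.log_self {b : ℕ} (hb : 1 < b) : Nat.log b b = 1 := by
  simpa using Nat.log_pow hb 1

lemma Nat.log_succ_of_not_dvd {b n : ℕ} (hb : 1 < b) (h : ¬ b ∣ n + 1) :
    Nat.log b (n + 1) = Nat.log b n := by
  rcases n.eq_zero_or_pos with rfl | hn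
  · simp [Nat.log_one_right, Nat.log_zero_right]
  refine ((Nat.log_eq_log_succ_iff hb hn.ne').2 fun hpow => h ?_).symm
  rw [← hpow]
  refine dvd_pow_self b fun hlog => ?_
  rw [hlog, pow_zero] at hpow
  omega

lemma digit_lt (i k : ℕ) {q : ℕ} (hq : 0 < q) : digit i q k < q := Nat.mod_lt _ hq

lemma digit_zero_succ_of_not_dvd {q n : ℕ} (h : ¬ q ∣ n + 1) :
    digit 0 q (n + 1) = digit 0 q n + 1 := by
  have hdiv := Nat.succ_div_of_not_dvd h
  have h₁ := Nat.div_add_mod n q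
  have h₂ := Nat.div_add_mod (n + 1) q
  rw [hdiv] at h₂
  simp only [digit, pow_zero, Nat.div_one]
  omega

lemma digit_succ_succ_of_not_dvd {q n : ℕ} (i : ℕ) (h : ¬ q ∣ n + 1) :
    digit (i + 1) q (n + 1) = digit (i + 1) q n := by
  have hpow : ¬ q ^ (i + 1) ∣ n + 1 := fun hi => h ((dvd_pow_self q i.succ_ne_zero).trans hi)
  rw [digit, digit, Nat.succ_div_of_not_dvd hpow]

def digitFactor (q k : ℕ) : ℕ := ∏ i ∈ range (Nat.log q k + 1), (q - digit i q k)

lemma digitFactor_pos (k : ℕ) {q : ℕ} (hq : 0 < q) : 0 < digitFactor q k :=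
  prod_pos fun i _ => Nat.sub_pos_of_lt (digit_lt i k hq)

lemma digitFactor_self {p : ℕ} (hp : 1 < p) : digitFactor p p = p * (p - 1) := by
  have h₀ : digit 0 p p = 0 := by simp [digit]
  have h₁ : digit 1 p p = 1 := by
    simp [digit, Nat.div_self (zero_lt_one.trans hp), Nat.mod_eq_of_lt hp]
  rw [digitFactor, Nat.log_self hp, prod_range_succ, prod_range_one, h₀, h₁, Nat.sub_zero]

lemma digitFactor_succ_of_not_dvd {q n : ℕ} (hq : 1 < q) (h : ¬ q ∣ n + 1) :
    digitFactor q (n + 1) * (q - digit 0 q n) = digitFactor q n * (q - (digit 0 q n + 1)) := by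
  simp only [digitFactor, Nat.log_succ_of_not_dvd hq h, prod_range_succ',
    digit_succ_succ_of_not_dvd _ h, digit_zero_succ_of_not_dvd h]
  ring

lemma digit_zero_add_one_lt_of_not_dvd {q n : ℕ} (hq : 0 < q) (h : ¬ q ∣ n + 1) :
    digit 0 q n + 1 < q :=
  digit_zero_succ_of_not_dvd h ▸ digit_lt 0 (n + 1) hq

lemma digitFactor_div_digitFactor_succ {q n : ℕ} (hq : 1 < q) (h : ¬ q ∣ n + 1) :
    (digitFactor q n : ℝ) / digitFactor q (n + 1) =
      (q - digit 0 q n) / (q - digit 0 q n - 1) := by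
  have hd := digit_zero_add_one_lt_of_not_dvd (zero_lt_one.trans hq) h
  have hd' : (digit 0 q n : ℝ) + 1 < q := by exact_mod_cast hd
  have hpos : (0 : ℝ) < digitFactor q (n + 1) := by exact_mod_cast digitFactor_pos _ (by omega)
  have key : (digitFactor q (n + 1) : ℝ) * (q - digit 0 q n) =
      digitFactor q n * (q - digit 0 q n - 1) := by
    have := congrArg (Nat.cast (R := ℝ)) (digitFactor_succ_of_not_dvd hq h)
    push_cast [Nat.cast_sub hd.le, Nat.cast_sub (by omega : digit 0 q n ≤ q)] at this
    linarith
  rw [div_eq_div_iff hpos.ne' (by linarith)]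
  linarith

lemma one_le_digitFactor_div_digitFactor_succ {q n : ℕ} (hq : 1 < q) (h : ¬ q ∣ n + 1) :
    1 ≤ (digitFactor q n : ℝ) / digitFactor q (n + 1) := by
  have hd : (digit 0 q n : ℝ) + 1 < q := by
    exact_mod_cast digit_zero_add_one_lt_of_not_dvd (zero_lt_one.trans hq) h
  rw [digitFactor_div_digitFactor_succ hq h, one_le_div (by linarith)]
  linarith

lemma digitFactor_div_digitFactor_succ_of_dvd {q n : ℕ} (hq : 1 < q) (h : q ∣ n) :
    (digitFactor q n : ℝ) / digitFactor q (n + 1) = q / (q - 1) := by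
  have hndvd : ¬ q ∣ n + 1 := fun h' => hq.ne' (Nat.dvd_one.mp ((Nat.dvd_add_right h).mp h'))
  have hd : digit 0 q n = 0 := by simpa [digit] using Nat.mod_eq_zero_of_dvd h
  rw [digitFactor_div_digitFactor_succ hq hndvd, hd, Nat.cast_zero, sub_zero]

lemma Mk_eq_prod_primesLE (k : ℕ) : Mk k = ∏ p ∈ k.primesLE, p ^ (Nat.log p k + 1) := rfl

lemma Rk_eq_prod_digitFactor (k : ℕ) : Rk k = ∏ q ∈ k.primesLE, digitFactor q k := rfl

lemma Mk_pos (k : ℕ) : 0 < Mk k :=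
  prod_pos fun _ hp => pow_pos (Nat.prime_of_mem_primesLE hp).pos _

lemma Nat.primesLE_succ_of_prime {n : ℕ} (hp : (n + 1).Prime) :
    (n + 1).primesLE = insert (n + 1) n.primesLE := by
  rw [primesLE_eq_filter_range, range_add_one, filter_insert, if_pos hp]
  rfl

lemma Nat.not_dvd_succ_of_mem_primesLE {n q : ℕ} (hp : (n + 1).Prime) (hq : q ∈ n.primesLE) :
    ¬ q ∣ n + 1 := fun hdvd => by
  rcases hp.eq_one_or_self_of_dvd q hdvd with rfl | rfl
  · exact Nat.not_prime_one (prime_of_mem_primesLE hq)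
  · exact (le_of_mem_primesLE hq).not_gt n.lt_succ_self

lemma Mk_succ_of_prime {n : ℕ} (hp : (n + 1).Prime) : Mk (n + 1) = (n + 1) ^ 2 * Mk n := by
  rw [Mk_eq_prod_primesLE, Nat.primesLE_succ_of_prime hp,
    prod_insert (by simp [Nat.mem_primesLE]), Nat.log_self hp.one_lt, Mk_eq_prod_primesLE]
  congr 1
  refine prod_congr rfl fun q hq => ?_
  rw [Nat.log_succ_of_not_dvd (Nat.one_lt_of_mem_primesLE hq)
    (Nat.not_dvd_succ_of_mem_primesLE hp hq)]

lemma Rk_succ_of_prime {n : ℕ} (hp : (n + 1).Prime) :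
    Rk (n + 1) = (n + 1) * n * ∏ q ∈ n.primesLE, digitFactor q (n + 1) := by
  rw [Rk_eq_prod_digitFactor, Nat.primesLE_succ_of_prime hp,
    prod_insert (by simp [Nat.mem_primesLE]), digitFactor_self hp.one_lt, Nat.add_sub_cancel]

lemma ghat_succ_div_ghat_of_prime {n : ℕ} (hp : (n + 1).Prime) :
    (ghat (n + 1) : ℝ) / ghat n =
      (n + 1) / n * ∏ q ∈ n.primesLE, (digitFactor q n : ℝ) / digitFactor q (n + 1) := by
  have hn : (0 : ℝ) < n := Nat.cast_pos.mpr (by have := hp.two_le; omega)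
  have hM : (0 : ℝ) < Mk n := by exact_mod_cast Mk_pos n
  have hR : (0 : ℝ) < ∏ q ∈ n.primesLE, (digitFactor q (n + 1) : ℝ) :=
    prod_pos fun q hq => by exact_mod_cast digitFactor_pos _ (Nat.prime_of_mem_primesLE hq).pos
  rw [prod_div_distrib, ghat, ghat, Mk_succ_of_prime hp, Rk_succ_of_prime hp,
    Rk_eq_prod_digitFactor]
  push_cast
  field_simp

lemma prod_div_sub_one_le_ghat_succ_div_ghat {n : ℕ} (hp : (n + 1).Prime) {S : Finset ℕ}
    (hS : ∀ q ∈ S, q.Prime ∧ q ∣ n) :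
    ∏ q ∈ S, (q : ℝ) / (q - 1) ≤ (ghat (n + 1) : ℝ) / ghat n := by
  have hn : 0 < n := by have := hp.two_le; omega
  have hsub : S ⊆ n.primesLE := fun q hq =>
    Nat.mem_primesLE.mpr ⟨Nat.le_of_dvd hn (hS q hq).2, (hS q hq).1⟩
  have hfactor_one_le :
      ∀ q ∈ n.primesLE, 1 ≤ (digitFactor q n : ℝ) / digitFactor q (n + 1) := fun q hq =>
    one_le_digitFactor_div_digitFactor_succ (Nat.one_lt_of_mem_primesLE hq)
      (Nat.not_dvd_succ_of_mem_primesLE hp hq)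
  calc ∏ q ∈ S, (q : ℝ) / (q - 1)
      = ∏ q ∈ S, (digitFactor q n : ℝ) / digitFactor q (n + 1) :=
        prod_congr rfl fun q hq =>
          (digitFactor_div_digitFactor_succ_of_dvd (hS q hq).1.one_lt (hS q hq).2).symm
    _ ≤ ∏ q ∈ n.primesLE, (digitFactor q n : ℝ) / digitFactor q (n + 1) :=
        prod_le_prod_of_subset_of_one_le hsub
          (fun q hq => zero_le_one.trans (hfactor_one_le q (hsub hq))) fun q hq _ =>
            hfactor_one_le q hq
    _ ≤ (n + 1) / n * ∏ q ∈ n.primesLE, (digitFactor q n : ℝ) / digitFactor q (n + 1) := by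
        refine le_mul_of_one_le_left (zero_le_one.trans (one_le_prod hfactor_one_le)) ?_
        rw [one_le_div (by positivity)]
        linarith
    _ = (ghat (n + 1) : ℝ) / ghat n := (ghat_succ_div_ghat_of_prime hp).symm

lemma exists_lt_prod_prime_div_sub_one (C : ℝ) :
    ∃ S : Finset ℕ, (∀ q ∈ S, q.Prime) ∧ C < ∏ q ∈ S, (q : ℝ) / (q - 1) := by
  have hdiv := (not_summable_iff_tendsto_nat_atTop_of_nonneg fun n =>
    Set.indicator_nonneg (fun q _ => by positivity) n).mp not_summable_one_div_on_primes
  obtain ⟨n, hn⟩ := (hdiv.eventually_gt_atTop C).exists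
  refine ⟨n.primesBelow, fun q hq => Nat.prime_of_mem_primesBelow hq, ?_⟩
  have hsum : ∑ i ∈ range n, Set.indicator {p | p.Prime} (fun m : ℕ => (1 : ℝ) / m) i =
      ∑ q ∈ n.primesBelow, (1 : ℝ) / q := by
    rw [Nat.primesBelow, sum_filter]
    exact sum_congr rfl fun i _ => Set.indicator_apply _ _ _
  calc C < ∑ q ∈ n.primesBelow, (1 : ℝ) / q := hsum ▸ hn
    _ < 1 + ∑ q ∈ n.primesBelow, (1 : ℝ) / q := lt_one_add _
    _ ≤ ∏ q ∈ n.primesBelow, (1 + (1 : ℝ) / q) :=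
        one_add_sum_le_prod_one_add _ fun q _ => by positivity
    _ ≤ ∏ q ∈ n.primesBelow, (q : ℝ) / (q - 1) := by
        refine prod_le_prod (fun q _ => by positivity) fun q hq => ?_
        have hq : (2 : ℝ) ≤ q := by exact_mod_cast (Nat.prime_of_mem_primesBelow hq).two_le
        rw [one_add_div (by positivity), div_le_div_iff₀ (by positivity) (by linarith)]
        nlinarith

/-- `limsup_{k→∞} ĝ(k+1)/ĝ(k) = ∞`: for every real `M` there are infinitely many
integers `k ≥ 2` with `ĝ(k+1)/ĝ(k) > M`. -/
theorem limsup_ghat_ratio_infinite :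
    ∀ M : ℝ, {k : ℕ | 2 ≤ k ∧ M < ((ghat (k + 1) : ℝ) / (ghat k : ℝ))}.Infinite := by
  intro M
  obtain ⟨S, hS, hMS⟩ := exists_lt_prod_prime_div_sub_one M
  have hQ : ∏ q ∈ S, q ≠ 0 := prod_ne_zero_iff.mpr fun q hq => (hS q hq).ne_zero
  refine Set.infinite_of_forall_exists_gt fun a => ?_
  obtain ⟨p, hp, hap, hmod⟩ := Nat.exists_prime_gt_modEq_one (a + 2) hQ
  obtain ⟨n, rfl⟩ : ∃ n, p = n + 1 := ⟨p - 1, by omega⟩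
  have hQn : ∏ q ∈ S, q ∣ n := by simpa using (Nat.modEq_iff_dvd' (by omega)).mp hmod.symm
  have hSn : ∀ q ∈ S, q.Prime ∧ q ∣ n := fun q hq =>
    ⟨hS q hq, (dvd_prod_of_mem _ hq).trans hQn⟩
  refine ⟨n, ⟨by omega, ?_⟩, by omega⟩
  exact hMS.trans_le (prod_div_sub_one_le_ghat_succ_div_ghat hp hSn)
end

section
/- As the integer k → ∞, log ∏_{√k < p ≤ k, p prime} p/(p − a_{1,p}(k)) = O(√k · log log k). -/
/-!
For `√k < p ≤ k` the digit is `a = ⌊k/p⌋`, so `a p ≤ k` and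
`p / (p - a) = p² / (p² - a p) ≤ p² / (p² - k)`. Forgetting primality, it suffices to show
`∑_{√k < n ≤ k} log (n² / (n² - k)) = O(√k)`. Put `m = ⌊√k⌋`, so `k < (m + 1)²`.
The term `n = m + 1` is at most `2 log (m + 1)`. For `m + 1 < n ≤ 2m + 1` the term is at most
`log (n / (n - m - 1))`, and these factors multiply to `(2m+1).choose m ≤ 4 ^ m`.
For `n > 2m + 1` the term is at most `2k / n²`, and `∑_{n > 2m+1} 1/n² ≤ 1/(m + 1)`.
-/

open Finset Filter Real Asymptotics

lemma one_le_div_sub {p a : ℝ} (ha : 0 ≤ a) (hap : a < p) : 1 ≤ p / (p - a) := by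
  rw [one_le_div (sub_pos.2 hap)]
  linarith

lemma div_sub_eq_sq_div_sq_sub {p a : ℝ} (hp : p ≠ 0) :
    p / (p - a) = p ^ 2 / (p ^ 2 - a * p) := by
  rw [show p ^ 2 - a * p = p * (p - a) by ring, pow_two, mul_div_mul_left _ _ hp]

lemma log_div_sub_le_log_sq_div_sub {p a x : ℝ} (hp : 0 < p) (hax : a * p ≤ x)
    (hx : x < p ^ 2) : log (p / (p - a)) ≤ log (p ^ 2 / (p ^ 2 - x)) := by
  rw [div_sub_eq_sq_div_sq_sub hp.ne']
  exact log_le_log (div_pos (by positivity) (by linarith))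
    (div_le_div_of_nonneg_left (sq_nonneg p) (sub_pos.2 hx) (by linarith))

lemma log_sq_div_sub_le_log_div_sub {p a x : ℝ} (hp : 0 < p) (hxa : x ≤ a * p)
    (hap : a < p) : log (p ^ 2 / (p ^ 2 - x)) ≤ log (p / (p - a)) := by
  have hpos : 0 < p ^ 2 - a * p := by nlinarith
  rw [div_sub_eq_sq_div_sq_sub hp.ne']
  exact log_le_log (div_pos (by positivity) (by linarith))
    (div_le_div_of_nonneg_left (sq_nonneg p) hpos (by linarith))

noncomputable def logSqRatio (k n : ℕ) : ℝ := log ((n : ℝ) ^ 2 / ((n : ℝ) ^ 2 - k))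

lemma cast_add_one_le_sqrt_add_one_sq (k : ℕ) : (k : ℝ) + 1 ≤ (k.sqrt + 1) ^ 2 := by
  exact_mod_cast Nat.lt_succ_sqrt' k

section
variable {k n : ℕ}

lemma cast_lt_sq_of_sqrt_lt (h : k.sqrt < n) : (k : ℝ) < n ^ 2 := by
  exact_mod_cast Nat.sqrt_lt'.1 h

lemma logSqRatio_nonneg (h : k.sqrt < n) : 0 ≤ logSqRatio k n :=
  log_nonneg (one_le_div_sub k.cast_nonneg (cast_lt_sq_of_sqrt_lt h))

lemma logSqRatio_sqrt_add_one_le : logSqRatio k (k.sqrt + 1) ≤ 2 * log (k.sqrt + 1) := by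
  have hden : (1 : ℝ) ≤ ((k.sqrt + 1 : ℕ) : ℝ) ^ 2 - k := by
    push_cast; linarith [cast_add_one_le_sqrt_add_one_sq k]
  calc logSqRatio k (k.sqrt + 1) ≤ log (((k.sqrt + 1 : ℕ) : ℝ) ^ 2) :=
        log_le_log (div_pos (by positivity) (by linarith)) (div_le_self (by positivity) hden)
    _ = 2 * log (k.sqrt + 1) := by push_cast; rw [log_pow]; norm_num

lemma logSqRatio_le_log_div_sub (h : k.sqrt + 1 < n) :
    logSqRatio k n ≤ log (n / (n - (k.sqrt + 1))) := by
  have hn : (k.sqrt : ℝ) + 1 < n := by exact_mod_cast h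
  refine log_sq_div_sub_le_log_div_sub (by linarith) ?_ hn
  nlinarith [cast_add_one_le_sqrt_add_one_sq k]

lemma logSqRatio_le_two_mul_inv_sq (h : 2 * k.sqrt + 1 < n) :
    logSqRatio k n ≤ 2 * k * ((n : ℝ) ^ 2)⁻¹ := by
  have hk := cast_add_one_le_sqrt_add_one_sq k
  have hn : 2 * ((k.sqrt : ℝ) + 1) ≤ n := by exact_mod_cast h
  have hn0 : (0 : ℝ) < n := by linarith
  have h2k : 2 * (k : ℝ) ≤ (n : ℝ) ^ 2 := by nlinarith
  have hpos : (0 : ℝ) < (n : ℝ) ^ 2 - k := by nlinarith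
  calc logSqRatio k n ≤ (n : ℝ) ^ 2 / ((n : ℝ) ^ 2 - k) - 1 :=
        log_le_sub_one_of_pos (div_pos (by positivity) hpos)
    _ = k / ((n : ℝ) ^ 2 - k) := by field_simp; ring
    _ ≤ 2 * k * ((n : ℝ) ^ 2)⁻¹ := by
        rw [← div_eq_mul_inv, div_le_div_iff₀ hpos (by positivity)]
        nlinarith [k.cast_nonneg (α := ℝ)]

end

lemma prod_range_add_succ_div_succ (n m : ℕ) :
    ∏ i ∈ range m, ((n + (i + 1) : ℕ) : ℝ) / (i + 1 : ℕ) = (n + m).choose m := by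
  have hasc := Nat.ascFactorial_eq_factorial_mul_choose n m
  rw [Nat.ascFactorial_eq_prod_range, ← Finset.prod_range_add_one_eq_factorial] at hasc
  have hfac : (0 : ℝ) < ∏ i ∈ range m, ((i + 1 : ℕ) : ℝ) :=
    prod_pos fun i _ => by positivity
  rw [prod_div_distrib, div_eq_iff hfac.ne']
  convert congrArg (Nat.cast (R := ℝ)) (hasc.trans (mul_comm _ _)) using 1 <;> push_cast
  · exact prod_congr rfl fun i _ => by ring
  · rfl

lemma sum_logSqRatio_near_le (k : ℕ) :
    ∑ n ∈ Ioc k.sqrt (2 * k.sqrt + 1), logSqRatio k n ≤ 5 * k.sqrt := by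
  have hsplit : ∑ n ∈ Ioc k.sqrt (2 * k.sqrt + 1), logSqRatio k n
      = ∑ i ∈ range k.sqrt, logSqRatio k (k.sqrt + 1 + (i + 1))
          + logSqRatio k (k.sqrt + 1) := by
    rw [← Finset.Ico_add_one_add_one_eq_Ioc, Finset.sum_Ico_eq_sum_range,
      show 2 * k.sqrt + 1 + 1 - (k.sqrt + 1) = k.sqrt + 1 by omega, Finset.sum_range_succ',
      add_zero]
  have hnear : ∑ i ∈ range k.sqrt, logSqRatio k (k.sqrt + 1 + (i + 1)) ≤ k.sqrt * log 4 :=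
    calc ∑ i ∈ range k.sqrt, logSqRatio k (k.sqrt + 1 + (i + 1))
        ≤ ∑ i ∈ range k.sqrt, log (((k.sqrt + 1 + (i + 1) : ℕ) : ℝ) / (i + 1 : ℕ)) :=
          sum_le_sum fun i _ =>
            (logSqRatio_le_log_div_sub (by omega)).trans_eq (by push_cast; ring_nf)
      _ = log ((2 * k.sqrt + 1).choose k.sqrt) := by
          rw [← log_prod fun i _ => by positivity, prod_range_add_succ_div_succ]
          ring_nf
      _ ≤ log (4 ^ k.sqrt) := log_le_log (by exact_mod_cast Nat.choose_pos (by omega))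
          (by exact_mod_cast Nat.choose_middle_le_pow k.sqrt)
      _ = k.sqrt * log 4 := log_pow 4 k.sqrt
  have hlog4 : log 4 ≤ 3 := by linarith [log_le_sub_one_of_pos (by norm_num : (0 : ℝ) < 4)]
  have hlog : log (k.sqrt + 1) ≤ k.sqrt := by
    linarith [log_le_sub_one_of_pos (by positivity : (0 : ℝ) < k.sqrt + 1)]
  rw [hsplit]
  nlinarith [logSqRatio_sqrt_add_one_le (k := k), (k.sqrt.cast_nonneg : (0 : ℝ) ≤ k.sqrt)]

lemma sum_logSqRatio_far_le (k N : ℕ) :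
    ∑ n ∈ Ioc (2 * k.sqrt + 1) N, logSqRatio k n ≤ 2 * (k.sqrt + 1) := by
  have hinv : ∑ n ∈ Ioc (2 * k.sqrt + 1) N, ((n : ℝ) ^ 2)⁻¹ ≤ 2 / (2 * k.sqrt + 2) := by
    have h := sum_Ioo_inv_sq_le (α := ℝ) (2 * k.sqrt + 1) (N + 1)
    rw [Finset.Ioo_add_one_right_eq_Ioc] at h
    push_cast at h
    rwa [add_assoc, one_add_one_eq_two] at h
  calc ∑ n ∈ Ioc (2 * k.sqrt + 1) N, logSqRatio k n
      ≤ ∑ n ∈ Ioc (2 * k.sqrt + 1) N, 2 * k * ((n : ℝ) ^ 2)⁻¹ :=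
        sum_le_sum fun n hn => logSqRatio_le_two_mul_inv_sq (mem_Ioc.1 hn).1
    _ = 2 * k * ∑ n ∈ Ioc (2 * k.sqrt + 1) N, ((n : ℝ) ^ 2)⁻¹ := (mul_sum _ _ _).symm
    _ ≤ 2 * k * (2 / (2 * k.sqrt + 2)) := mul_le_mul_of_nonneg_left hinv (by positivity)
    _ = 2 * k / (k.sqrt + 1) := by field_simp
    _ ≤ 2 * (k.sqrt + 1) := by
        rw [div_le_iff₀ (by positivity)]
        nlinarith [cast_add_one_le_sqrt_add_one_sq k]

lemma sum_logSqRatio_le (k N : ℕ) :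
    ∑ n ∈ Ioc k.sqrt N, logSqRatio k n ≤ 7 * (k.sqrt + 1) := by
  have hsub : Ioc k.sqrt N ⊆ Ioc k.sqrt (2 * k.sqrt + 1) ∪ Ioc (2 * k.sqrt + 1) N := by
    intro n hn
    simp only [mem_union, mem_Ioc] at hn ⊢
    omega
  have hdisj : Disjoint (Ioc k.sqrt (2 * k.sqrt + 1)) (Ioc (2 * k.sqrt + 1) N) :=
    disjoint_left.2 fun n h₁ h₂ => by simp only [mem_Ioc] at h₁ h₂; omega
  calc ∑ n ∈ Ioc k.sqrt N, logSqRatio k n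
      ≤ ∑ n ∈ Ioc k.sqrt (2 * k.sqrt + 1) ∪ Ioc (2 * k.sqrt + 1) N, logSqRatio k n :=
        sum_le_sum_of_subset_of_nonneg hsub fun n hn _ => logSqRatio_nonneg (by
          simp only [mem_union, mem_Ioc] at hn; omega)
    _ = ∑ n ∈ Ioc k.sqrt (2 * k.sqrt + 1), logSqRatio k n
          + ∑ n ∈ Ioc (2 * k.sqrt + 1) N, logSqRatio k n := sum_union hdisj
    _ ≤ 7 * (k.sqrt + 1) := by
        linarith [sum_logSqRatio_near_le k, sum_logSqRatio_far_le k N]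

section
variable {k p : ℕ}

lemma digit_one_eq_div (h : k < p * p) : digit 1 p k = k / p := by
  have hp : 0 < p := Nat.pos_of_mul_pos_left (k.zero_le.trans_lt h)
  simp [digit, Nat.mod_eq_of_lt ((Nat.div_lt_iff_lt_mul hp).2 h)]

lemma cast_digit_one_lt (h : k < p * p) : (digit 1 p k : ℝ) < p := by
  have hp : 0 < p := Nat.pos_of_mul_pos_left (k.zero_le.trans_lt h)
  rw [digit_one_eq_div h]
  exact_mod_cast (Nat.div_lt_iff_lt_mul hp).2 h

lemma one_le_div_sub_digit_one (h : k < p * p) : 1 ≤ (p : ℝ) / (p - digit 1 p k) :=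
  one_le_div_sub (Nat.cast_nonneg _) (cast_digit_one_lt h)

lemma log_div_sub_digit_one_le_logSqRatio (h : k < p * p) :
    log ((p : ℝ) / (p - digit 1 p k)) ≤ logSqRatio k p := by
  have hp : 0 < p := Nat.pos_of_mul_pos_left (k.zero_le.trans_lt h)
  refine log_div_sub_le_log_sq_div_sub (by exact_mod_cast hp) ?_ (by exact_mod_cast sq p ▸ h)
  rw [digit_one_eq_div h]
  exact_mod_cast Nat.div_mul_le_self k p

end

section
variable {k : ℕ} {s : Finset ℕ}

lemma log_prod_div_sub_digit_one_nonneg (hs : s ⊆ Ioc k.sqrt k) :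
    0 ≤ log (∏ p ∈ s, (p : ℝ) / (p - digit 1 p k)) :=
  log_nonneg (Finset.one_le_prod fun _ hp => one_le_div_sub_digit_one
    (Nat.sqrt_lt.1 (mem_Ioc.1 (hs hp)).1))

lemma log_prod_div_sub_digit_one_le (hs : s ⊆ Ioc k.sqrt k) :
    log (∏ p ∈ s, (p : ℝ) / (p - digit 1 p k))
      ≤ ∑ n ∈ Ioc k.sqrt k, logSqRatio k n := by
  have hlt : ∀ p ∈ s, k < p * p := fun p hp => Nat.sqrt_lt.1 (mem_Ioc.1 (hs hp)).1
  rw [log_prod fun p hp => (zero_lt_one.trans_le (one_le_div_sub_digit_one (hlt p hp))).ne']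
  calc ∑ p ∈ s, log ((p : ℝ) / (p - digit 1 p k))
      ≤ ∑ p ∈ s, logSqRatio k p :=
        sum_le_sum fun p hp => log_div_sub_digit_one_le_logSqRatio (hlt p hp)
    _ ≤ ∑ n ∈ Ioc k.sqrt k, logSqRatio k n :=
        sum_le_sum_of_subset_of_nonneg hs fun n hn _ => logSqRatio_nonneg (mem_Ioc.1 hn).1

end

lemma sqrt_isBigO_sqrt_mul_log_log :
    (fun k : ℕ => √(k : ℝ)) =O[atTop] (fun k : ℕ => √(k : ℝ) * log (log k)) := by
  refine IsBigO.of_bound 1 ?_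
  filter_upwards [(tendsto_log_atTop.comp (tendsto_log_atTop.comp
    tendsto_natCast_atTop_atTop)).eventually_ge_atTop 1] with k hk
  rw [norm_mul, one_mul]
  exact le_mul_of_one_le_right (norm_nonneg _) (hk.trans (le_abs_self _))

/-- `log ∏_{√k < p ≤ k} p/(p − a_{1,p}(k)) = O(√k · log log k)`.
Here `√k < p` is expressed as `k < p * p`. -/
theorem middle_digit_product_bound :
    (fun k : ℕ =>
        Real.log (∏ p ∈ (Finset.range (k + 1)).filter (fun p => p.Prime ∧ k < p * p),
          (p : ℝ) / (p - digit 1 p k)))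
      =O[atTop] (fun k : ℕ => Real.sqrt k * Real.log (Real.log k)) := by
  have hs : ∀ k, (range (k + 1)).filter (fun p => p.Prime ∧ k < p * p) ⊆ Ioc k.sqrt k :=
    fun k p hp => by
      simp only [mem_filter, mem_range, mem_Ioc] at hp ⊢
      exact ⟨Nat.sqrt_lt.2 hp.2.2, by omega⟩
  refine IsBigO.trans (IsBigO.of_bound 14 ?_) sqrt_isBigO_sqrt_mul_log_log
  filter_upwards [eventually_ge_atTop 1] with k hk
  rw [norm_of_nonneg (log_prod_div_sub_digit_one_nonneg (hs k)), norm_of_nonneg (sqrt_nonneg _)]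
  have hsqrt : (k.sqrt : ℝ) + 1 ≤ 2 * √k := by
    have : (1 : ℝ) ≤ √k := one_le_sqrt.2 (by exact_mod_cast hk)
    linarith [Real.nat_sqrt_le_real_sqrt (a := k)]
  calc _ ≤ 7 * ((k.sqrt : ℝ) + 1) :=
        (log_prod_div_sub_digit_one_le (hs k)).trans (sum_logSqRatio_le k k)
    _ ≤ 14 * √k := by linarith
end

section
/- Let k ≥ 2 be an integer such that k+1 is prime. Then R_k / R_{k+1} = (1/(k(k+1))) · ∏_{p ≤ k, p prime} (p − a_{0,p}(k))/(p − 1 − a_{0,p}(k)). (Each denominator is positive because k+1 is prime, so a_{0,p}(k) ≤ p − 2 for every prime p ≤ k.) -/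
open Finset Filter Real Asymptotics

lemma digit_zero (p k : ℕ) : digit 0 p k = k % p := by
  simp [digit]

section aux

variable {k p : ℕ} (hkp : Nat.Prime (k + 1)) (pp : p.Prime) (hpk : p ≤ k)

include hkp pp hpk

lemma aux_not_dvd : ¬ p ∣ (k + 1) := by
  intro h
  rcases (Nat.Prime.eq_one_or_self_of_dvd hkp p h) with h1 | h1
  · exact pp.one_lt.ne' h1
  · omega

omit hkp hpk in
lemma aux_hm : (k + 1) % p = (k % p + 1) % p := by
  conv_lhs => rw [Nat.add_mod, Nat.one_mod_eq_one.mpr pp.one_lt.ne']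

lemma aux_mod_lt : k % p + 1 < p := by
  have h1 : k % p < p := Nat.mod_lt _ pp.pos
  rcases lt_or_eq_of_le (Nat.succ_le_of_lt h1) with h | h
  · exact h
  exfalso
  apply aux_not_dvd hkp pp hpk
  have hm := aux_hm (k := k) (p := p) pp
  rw [show k % p + 1 = p from h, Nat.mod_self] at hm
  exact Nat.dvd_of_mod_eq_zero hm

lemma aux_mod_succ : (k + 1) % p = k % p + 1 := by
  have hm := aux_hm (k := k) (p := p) pp
  rwa [Nat.mod_eq_of_lt (aux_mod_lt hkp pp hpk)] at hm

lemma aux_div_succ : (k + 1) / p = k / p := by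
  rw [Nat.succ_div, if_neg (aux_not_dvd hkp pp hpk), Nat.add_zero]

lemma aux_digit_succ (i : ℕ) : digit (i + 1) p (k + 1) = digit (i + 1) p k := by
  unfold digit
  rw [pow_succ', ← Nat.div_div_eq_div_mul, ← Nat.div_div_eq_div_mul,
    aux_div_succ hkp pp hpk]

lemma aux_log_succ : Nat.log p (k + 1) = Nat.log p k := by
  have hle : Nat.log p k ≤ Nat.log p (k + 1) := Nat.log_mono_right (Nat.le_succ k)
  rcases lt_or_eq_of_le hle with hlt | h
  · exfalso
    have h1 : p ^ Nat.log p (k + 1) ≤ k + 1 := Nat.pow_log_le_self p (by omega)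
    have h2 : k < p ^ (Nat.log p k + 1) := Nat.lt_pow_succ_log_self pp.one_lt k
    have h3 : p ^ (Nat.log p k + 1) ≤ p ^ Nat.log p (k + 1) :=
      Nat.pow_le_pow_right pp.pos hlt
    have h4 : p ^ Nat.log p (k + 1) = k + 1 := by omega
    apply aux_not_dvd hkp pp hpk
    rw [← h4]
    exact dvd_pow_self p (by omega : Nat.log p (k + 1) ≠ 0)
  · exact h.symm

end aux

/-- If `k ≥ 2` and `k+1` is prime, then
`R_k / R_{k+1} = (1/(k(k+1))) · ∏_{p ≤ k} (p − a_{0,p}(k))/(p − 1 − a_{0,p}(k))`. -/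
theorem Rk_ratio_succ_prime (k : ℕ) (hk : 2 ≤ k) (hkp : Nat.Prime (k + 1)) :
    (Rk k : ℚ) / (Rk (k + 1) : ℚ) =
      (1 / ((k : ℚ) * (k + 1))) *
        ∏ p ∈ (Finset.range (k + 1)).filter Nat.Prime,
          ((p : ℚ) - digit 0 p k) / ((p : ℚ) - 1 - digit 0 p k) := by
  set S := (Finset.range (k + 1)).filter Nat.Prime with hS
  have hmem : ∀ p ∈ S, p.Prime ∧ p ≤ k := by
    intro p hp
    rw [hS, mem_filter, mem_range] at hp
    exact ⟨hp.2, by omega⟩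
  -- tail product
  set T : ℕ → ℕ := fun p => ∏ i ∈ Finset.range (Nat.log p k), (p - digit (i + 1) p k)
    with hT
  -- Rk k decomposition
  have ek : Rk k = ∏ p ∈ S, (T p * (p - k % p)) := by
    unfold Rk
    apply Finset.prod_congr rfl
    intro p hp
    rw [Finset.prod_range_succ', digit_zero]
  -- inner product for k+1, for p ≤ k
  have einner : ∀ p ∈ S, ∏ i ∈ Finset.range (Nat.log p (k + 1) + 1),
      (p - digit i p (k + 1)) = T p * (p - (k % p + 1)) := by
    intro p hp
    obtain ⟨pp, hpk⟩ := hmem p hp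
    rw [aux_log_succ hkp pp hpk, Finset.prod_range_succ', digit_zero,
      aux_mod_succ hkp pp hpk]
    congr 1
    apply Finset.prod_congr rfl
    intro i _
    rw [aux_digit_succ hkp pp hpk]
  -- Rk (k+1) decomposition
  have hSsucc : (Finset.range (k + 2)).filter Nat.Prime = insert (k + 1) S := by
    rw [hS, Finset.range_add_one, Finset.filter_insert, if_pos hkp]
  have hnotmem : k + 1 ∉ S := by
    rw [hS, mem_filter, mem_range]
    omega
  have hlogkk : Nat.log (k + 1) (k + 1) = 1 :=
    Nat.log_eq_of_pow_le_of_lt_pow (by rw [pow_one])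
      (by rw [pow_succ, pow_one]; nlinarith)
  have etop : ∏ i ∈ Finset.range (Nat.log (k + 1) (k + 1) + 1),
      ((k + 1) - digit i (k + 1) (k + 1)) = (k + 1) * k := by
    rw [hlogkk]
    have h0 : digit 0 (k + 1) (k + 1) = 0 := by
      unfold digit
      rw [pow_zero, Nat.div_one, Nat.mod_self]
    have h1 : digit 1 (k + 1) (k + 1) = 1 := by
      unfold digit
      rw [pow_one, Nat.div_self (by omega), Nat.mod_eq_of_lt (by omega)]
    rw [Finset.prod_range_succ, Finset.prod_range_one, h0, h1]
    simp
  have ek1 : Rk (k + 1) = (k + 1) * k * ∏ p ∈ S, (T p * (p - (k % p + 1))) := by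
    unfold Rk
    rw [hSsucc, Finset.prod_insert hnotmem, etop]
    congr 1
    exact Finset.prod_congr rfl einner
  -- cast to ℚ
  have hcast1 : ∀ p ∈ S, ((T p * (p - k % p) : ℕ) : ℚ)
      = (T p : ℚ) * ((p : ℚ) - digit 0 p k) := by
    intro p hp
    obtain ⟨pp, _⟩ := hmem p hp
    have : k % p ≤ p := le_of_lt (Nat.mod_lt _ pp.pos)
    rw [digit_zero]
    push_cast [this]
    ring
  have hcast2 : ∀ p ∈ S, ((T p * (p - (k % p + 1)) : ℕ) : ℚ)
      = (T p : ℚ) * ((p : ℚ) - 1 - digit 0 p k) := by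
    intro p hp
    obtain ⟨pp, hpk⟩ := hmem p hp
    have h := aux_mod_lt hkp pp hpk
    have : k % p + 1 ≤ p := le_of_lt h
    rw [digit_zero]
    push_cast [this]
    ring
  have e1 : (Rk k : ℚ) = (∏ p ∈ S, (T p : ℚ)) * ∏ p ∈ S, ((p : ℚ) - digit 0 p k) := by
    rw [ek]
    push_cast
    rw [← Finset.prod_mul_distrib]
    exact Finset.prod_congr rfl (by intro p hp; rw [← hcast1 p hp]; push_cast; ring)
  have e2 : (Rk (k + 1) : ℚ) = ((k : ℚ) + 1) * k * ((∏ p ∈ S, (T p : ℚ))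
      * ∏ p ∈ S, ((p : ℚ) - 1 - digit 0 p k)) := by
    rw [ek1]
    push_cast
    rw [← Finset.prod_mul_distrib]
    congr 1
    exact Finset.prod_congr rfl (by intro p hp; rw [← hcast2 p hp]; push_cast; ring)
  -- nonvanishing
  have hTne : (∏ p ∈ S, (T p : ℚ)) ≠ 0 := by
    rw [Finset.prod_ne_zero_iff]
    intro p hp
    obtain ⟨pp, _⟩ := hmem p hp
    have : T p ≠ 0 := by
      rw [hT]
      simp only [Finset.prod_ne_zero_iff]
      intro i _
      have : digit (i + 1) p k < p := Nat.mod_lt _ pp.pos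
      omega
    exact_mod_cast this
  have hBne : ∀ p ∈ S, ((p : ℚ) - 1 - digit 0 p k) ≠ 0 := by
    intro p hp
    obtain ⟨pp, hpk⟩ := hmem p hp
    have h := aux_mod_lt hkp pp hpk
    rw [digit_zero]
    have h1 : ((k % p : ℕ) : ℚ) + 1 < (p : ℚ) := by exact_mod_cast h
    intro hc
    have : (p : ℚ) = (k % p : ℕ) + 1 := by linarith
    linarith
  have hBprod : (∏ p ∈ S, ((p : ℚ) - 1 - digit 0 p k)) ≠ 0 := by
    rw [Finset.prod_ne_zero_iff]
    exact hBne
  have hk0 : (k : ℚ) ≠ 0 := by positivity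
  have hk1 : (k : ℚ) + 1 ≠ 0 := by positivity
  rw [e1, e2, Finset.prod_div_distrib]
  field_simp
end

section
/- Let k ≥ 2 be an integer such that k+1 is prime. Then ĝ(k+1)/ĝ(k) ≥ ((k+1)/k) · ∏_{p ≤ k, p prime} p/(p−1). -/
open Finset Filter Real Asymptotics

/-- If `k ≥ 2` and `k+1` is prime, then
`ĝ(k+1)/ĝ(k) ≥ ((k+1)/k) · ∏_{p ≤ k, p prime} p/(p−1)`. -/
theorem ghat_ratio_ge (k : ℕ) (hk : 2 ≤ k) (hkp : Nat.Prime (k + 1)) :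
    ((k + 1 : ℚ) / k) *
        ∏ p ∈ (Finset.range (k + 1)).filter Nat.Prime, (p : ℚ) / ((p : ℚ) - 1)
      ≤ ghat (k + 1) / ghat k := by
  set S := (Finset.range (k + 1)).filter Nat.Prime with hS
  have hmemS : ∀ p ∈ S, p.Prime ∧ p ≤ k := by
    intro p hp
    simp only [hS, Finset.mem_filter, Finset.mem_range] at hp
    exact ⟨hp.2, by omega⟩
  have hndvd : ∀ p ∈ S, ¬ p ∣ (k + 1) := by
    intro p hp hd
    obtain ⟨hpp, hple⟩ := hmemS p hp
    rcases (hkp.eq_one_or_self_of_dvd p hd) with h | h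
    · exact hpp.ne_one h
    · omega
  have hmod : ∀ p ∈ S, k % p < p - 1 := by
    intro p hp
    obtain ⟨hpp, hple⟩ := hmemS p hp
    have h2 : 2 ≤ p := hpp.two_le
    have h1 : k % p < p := Nat.mod_lt _ hpp.pos
    by_contra h
    have heq : k % p = p - 1 := by omega
    apply hndvd p hp
    rw [Nat.dvd_iff_mod_eq_zero, Nat.add_mod, heq]
    have : (p - 1 + 1 % p) = p := by
      rw [Nat.mod_eq_of_lt (by omega)]; omega
    rw [this, Nat.mod_self]
  have hlog : ∀ p ∈ S, Nat.log p (k + 1) = Nat.log p k := by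
    intro p hp
    obtain ⟨hpp, hple⟩ := hmemS p hp
    refine le_antisymm ?_ (Nat.log_mono_right (by omega))
    by_contra h
    push_neg at h
    have h1 : p ^ (Nat.log p k + 1) ≤ p ^ (Nat.log p (k + 1)) :=
      Nat.pow_le_pow_right hpp.pos h
    have h2 : p ^ (Nat.log p (k + 1)) ≤ k + 1 := Nat.pow_log_le_self p (by omega)
    have h3 : k < p ^ (Nat.log p k + 1) := Nat.lt_pow_succ_log_self hpp.one_lt k
    have h4 : p ^ (Nat.log p k + 1) = k + 1 := by omega
    exact hndvd p hp (h4 ▸ dvd_pow_self p (Nat.succ_ne_zero _))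
  have hdig0 : ∀ p ∈ S, digit 0 p (k + 1) = k % p + 1 := by
    intro p hp
    have h2 := (hmemS p hp).1.two_le
    have hm := hmod p hp
    simp only [digit, pow_zero, Nat.div_one]
    rw [Nat.add_mod, Nat.mod_eq_of_lt (a := 1) (by omega),
      Nat.mod_eq_of_lt (by omega)]
  have hdigs : ∀ p ∈ S, ∀ i, digit (i + 1) p (k + 1) = digit (i + 1) p k := by
    intro p hp i
    have hdiv : (k + 1) / p = k / p := Nat.succ_div_of_not_dvd (hndvd p hp)
    simp only [digit, pow_succ]
    have hsw : ∀ m : ℕ, m / (p ^ i * p) = m / p / p ^ i := fun m => by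
      rw [mul_comm, ← Nat.div_div_eq_div_mul]
    rw [hsw, hsw, hdiv]
  have hnotmem : (k + 1) ∉ S := by
    simp [hS, Finset.mem_filter, Finset.mem_range]
  have hSins : (Finset.range (k + 2)).filter Nat.Prime = insert (k + 1) S := by
    ext n
    simp only [hS, Finset.mem_filter, Finset.mem_range, Finset.mem_insert]
    constructor
    · rintro ⟨h1, h2⟩
      rcases Nat.lt_or_ge n (k + 1) with h | h
      · exact Or.inr ⟨h, h2⟩
      · exact Or.inl (by omega)
    · rintro (rfl | ⟨h1, h2⟩)
      · exact ⟨by omega, hkp⟩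
      · exact ⟨by omega, h2⟩
  -- structural equalities
  have hlogq : Nat.log (k + 1) (k + 1) = 1 :=
    Nat.log_eq_one_iff'.2 ⟨le_rfl, by nlinarith⟩
  have hMk1 : Mk (k + 1) = (k + 1) ^ 2 * Mk k := by
    unfold Mk
    rw [hSins, Finset.prod_insert hnotmem, hlogq]
    congr 1
    exact Finset.prod_congr rfl fun p hp => by rw [hlog p hp]
  have hRk : Rk k = ∏ p ∈ S,
      ((p - k % p) * ∏ i ∈ Finset.range (Nat.log p k), (p - digit (i + 1) p k)) := by
    unfold Rk
    refine Finset.prod_congr rfl fun p hp => ?_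
    rw [Finset.prod_range_succ']
    have : digit 0 p k = k % p := by simp [digit]
    rw [this, mul_comm]
  have hRk1 : Rk (k + 1) = ((k + 1) * k) * ∏ p ∈ S,
      ((p - (k % p + 1)) * ∏ i ∈ Finset.range (Nat.log p k), (p - digit (i + 1) p k)) := by
    unfold Rk
    rw [hSins, Finset.prod_insert hnotmem]
    congr 1
    · rw [hlogq]
      have e0 : digit 0 (k + 1) (k + 1) = 0 := by simp [digit]
      have e1 : digit 1 (k + 1) (k + 1) = 1 := by
        simp only [digit, pow_one, Nat.div_self (by omega : 0 < k + 1)]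
        exact Nat.mod_eq_of_lt (by omega)
      rw [show (1 : ℕ) + 1 = 2 from rfl]
      rw [Finset.prod_range_succ, Finset.prod_range_one, e0, e1]
      simp
    · refine Finset.prod_congr rfl fun p hp => ?_
      rw [hlog p hp, Finset.prod_range_succ', hdig0 p hp, mul_comm]
      congr 1
      exact Finset.prod_congr rfl fun i _ => by rw [hdigs p hp i]
  -- positivity facts
  have hMpos : 0 < Mk k := by
    apply Finset.prod_pos
    intro p hp
    exact pow_pos (hmemS p hp).1.pos _
  have hTpos : ∀ p ∈ S, 0 < ∏ i ∈ Finset.range (Nat.log p k), (p - digit (i + 1) p k) := by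
    intro p hp
    apply Finset.prod_pos
    intro i _
    have : digit (i + 1) p k < p := Nat.mod_lt _ (hmemS p hp).1.pos
    omega
  -- key rational identity
  have key : ghat (k + 1) / ghat k = ((k + 1 : ℚ) / k) *
      ∏ p ∈ S, ((p - k % p : ℕ) : ℚ) / ((p - (k % p + 1) : ℕ) : ℚ) := by
    unfold ghat
    rw [hMk1, hRk1, hRk]
    push_cast
    rw [Finset.prod_mul_distrib, Finset.prod_mul_distrib, Finset.prod_div_distrib]
    have hA' : (∏ p ∈ S, ((p - (k % p + 1) : ℕ) : ℚ)) ≠ 0 := by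
      apply Finset.prod_ne_zero_iff.2
      intro p hp
      have := hmod p hp
      have h2 := (hmemS p hp).1.two_le
      have h0 : (0:ℕ) < p - (k % p + 1) := by omega
      exact Nat.cast_ne_zero.2 h0.ne'
    have hT' : (∏ x ∈ S, ∏ i ∈ Finset.range (Nat.log x k),
        ((x - digit (i + 1) x k : ℕ) : ℚ)) ≠ 0 := by
      apply Finset.prod_ne_zero_iff.2
      intro p hp
      apply Finset.prod_ne_zero_iff.2
      intro i _
      have : digit (i + 1) p k < p := Nat.mod_lt _ (hmemS p hp).1.pos
      exact Nat.cast_ne_zero.2 (by omega)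
    have hM' : ((Mk k : ℚ)) ≠ 0 := Nat.cast_ne_zero.2 hMpos.ne'
    have hk0 : (k : ℚ) ≠ 0 := Nat.cast_ne_zero.2 (by omega)
    have gen : ∀ (a b M A A' T : ℚ), M ≠ 0 → A' ≠ 0 → T ≠ 0 → b ≠ 0 →
        (a + 1) ^ 2 * M / ((a + 1) * b * (A' * T)) / (M / (A * T)) = (a + 1) / b * (A / A') := by
      intro a b M A A' T hM hA'' hT hb
      rcases eq_or_ne (a + 1) 0 with h | h
      · simp [h]
      · field_simp
    exact gen (k : ℚ) (k : ℚ) (Mk k : ℚ) _ _ _ hM' hA' hT' hk0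
  rw [key]
  apply mul_le_mul_of_nonneg_left _ (by positivity)
  apply Finset.prod_le_prod
  · intro p hp
    have h2 := (hmemS p hp).1.two_le
    apply div_nonneg (by positivity)
    have : (2:ℚ) ≤ (p:ℚ) := by exact_mod_cast h2
    linarith
  · intro p hp
    have h2 := (hmemS p hp).1.two_le
    have hm := hmod p hp
    have hc1 : ((p - k % p : ℕ) : ℚ) = (p : ℚ) - (k % p : ℕ) := by
      push_cast [Nat.cast_sub (by omega : k % p ≤ p)]; ring
    have hc2 : ((p - (k % p + 1) : ℕ) : ℚ) = (p : ℚ) - (k % p : ℕ) - 1 := by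
      push_cast [Nat.cast_sub (by omega : k % p + 1 ≤ p)]; ring
    rw [hc1, hc2]
    have ha : (0:ℚ) ≤ (k % p : ℕ) := by positivity
    have hp2 : (2:ℚ) ≤ (p:ℚ) := by exact_mod_cast h2
    have hmq : ((k % p : ℕ) : ℚ) < (p:ℚ) - 1 := by
      have h3 : ((k % p : ℕ) : ℚ) + 1 < (p : ℚ) := by exact_mod_cast (by omega : k % p + 1 < p)
      linarith
    rw [div_le_div_iff₀ (by linarith) (by linarith)]
    nlinarith
end

section
/- As the integer k → ∞, log ĝ(k) − log ∏_{√k < p ≤ k, p prime} p/(p − a_{0,p}(k)) = O(√k · log log k). -/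
open Finset Filter Real Asymptotics

/-!
Write `log ĝ(k) = ∑_{p ≤ k} ∑_{i ≤ log_p k} w_i(p)` with `w_i(p) = log (p / (p - a_{i,p}(k)))`
(`digitWeight i p k`), so that `0 ≤ w_i(p) ≤ log p`. The main term is the sum of `w_0(p)` over
`p > √k`, hence the difference is the sum of `w_0(p)` over `p ≤ √k`, at most `θ(√k)`, plus the
contribution of the higher digits. Bounding `w_i(p) ≤ log p` for `i ≥ 2` costs
`∑_p (log_p k - 1) log p = ψ(k) - θ(k) = O(√k)`. For `i = 1`, `w_1(p) ≤ log p` is enough for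
`p ≤ 2√k` (total `θ(2√k)`), while for `p > 2√k` the digit is at most `k / p ≤ p / 4`, so
`w_1(p) ≤ 4k / 3p²`, whose sum over `p > 2√k` is `O(√k)`.
-/

open Chebyshev

noncomputable def mainTerm (k : ℕ) : ℝ :=
  ∏ p ∈ (range (k + 1)).filter (fun p => p.Prime ∧ k < p * p), (p : ℝ) / (p - digit 0 p k)

noncomputable def digitWeight (i p k : ℕ) : ℝ := log ((p : ℝ) / (p - digit i p k))

section DigitWeight

variable {p : ℕ} (i k : ℕ)

lemma one_le_sub_digit (hp : 0 < p) : (1 : ℝ) ≤ p - digit i p k := by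
  have : digit i p k + 1 ≤ p := Nat.mod_lt _ hp
  rw [le_sub_iff_add_le']
  exact_mod_cast this

lemma div_sub_digit_pos (hp : 0 < p) : 0 < (p : ℝ) / (p - digit i p k) :=
  div_pos (by exact_mod_cast hp) (zero_lt_one.trans_le (one_le_sub_digit i k hp))

lemma digitWeight_nonneg (hp : 0 < p) : 0 ≤ digitWeight i p k :=
  log_nonneg <| (one_le_div (by linarith [one_le_sub_digit i k hp])).2 (by simp)

lemma digitWeight_le_log (hp : 0 < p) : digitWeight i p k ≤ log p := by
  have h := one_le_sub_digit i k hp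
  rw [digitWeight, log_div (by positivity) (by linarith)]
  linarith [log_nonneg h]

lemma digitWeight_le_div (hp : 0 < p) :
    digitWeight i p k ≤ digit i p k / (p - digit i p k) := by
  have h := one_le_sub_digit i k hp
  calc digitWeight i p k ≤ p / (p - digit i p k) - 1 :=
        log_le_sub_one_of_pos (div_sub_digit_pos i k hp)
    _ = _ := by field_simp; ring

lemma digitWeight_one_le (hp : 0 < p) (hk : 4 * k ≤ p * p) :
    digitWeight 1 p k ≤ 4 * k / (3 * p ^ 2) := by
  have hd : p * digit 1 p k ≤ k :=
    (Nat.mul_le_mul_left p (Nat.mod_le _ _)).trans (by simpa using Nat.mul_div_le k p)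
  have h1 := one_le_sub_digit 1 k hp
  set d := digit 1 p k
  have hdR : (p : ℝ) * d ≤ k := by exact_mod_cast hd
  have hkR : 4 * (k : ℝ) ≤ p * p := by exact_mod_cast hk
  have hpR : (0 : ℝ) < p := by exact_mod_cast hp
  have h4d : 4 * (d : ℝ) ≤ p := by nlinarith
  refine (digitWeight_le_div 1 k hp).trans ?_
  rw [div_le_div_iff₀ (by linarith) (by positivity)]
  nlinarith [mul_le_mul_of_nonneg_right hdR (by linarith : (0 : ℝ) ≤ p - d),
    mul_nonneg (mul_nonneg hpR.le (Nat.cast_nonneg d)) (by linarith : (0 : ℝ) ≤ p - 4 * d)]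

lemma sum_digitWeight_succ_le (hp : 1 < p) (hpk : p ≤ k) :
    ∑ i ∈ range (Nat.log p k), digitWeight (i + 1) p k ≤
      digitWeight 1 p k + ((Nat.log p k : ℝ) - 1) * log p := by
  obtain ⟨m, hm⟩ := Nat.exists_eq_add_of_le' (Nat.log_pos hp hpk)
  have hrest : ∑ i ∈ range m, digitWeight (i + 1 + 1) p k ≤ m * log p := by
    simpa using sum_le_sum fun i (_ : i ∈ range m) =>
      digitWeight_le_log (i + 1 + 1) k (zero_lt_one.trans hp)
  rw [hm, sum_range_succ']
  push_cast
  linarith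

end DigitWeight

lemma log_ghat_eq_sum (k : ℕ) :
    log (ghat k : ℝ) =
      ∑ p ∈ Nat.primesLE k, ∑ i ∈ range (Nat.log p k + 1), digitWeight i p k := by
  have hghat : (ghat k : ℝ) =
      ∏ p ∈ Nat.primesLE k, ∏ i ∈ range (Nat.log p k + 1), (p : ℝ) / (p - digit i p k) := by
    simp only [prod_div_distrib, prod_const, card_range, ghat, Mk, Rk]
    push_cast
    congr 1
    exact prod_congr rfl fun p hp => prod_congr rfl fun i _ =>
      Nat.cast_sub (Nat.mod_lt _ (Nat.prime_of_mem_primesLE hp).pos).le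
  have hpos {p} (hp : p ∈ Nat.primesLE k) (i : ℕ) : 0 < (p : ℝ) / (p - digit i p k) :=
    div_sub_digit_pos i k (Nat.prime_of_mem_primesLE hp).pos
  rw [hghat, log_prod fun p hp => (prod_pos fun i _ => hpos hp i).ne']
  exact sum_congr rfl fun p hp => log_prod fun i _ => (hpos hp i).ne'

lemma log_mainTerm_eq_sum (k : ℕ) :
    log (mainTerm k) =
      ∑ p ∈ (Nat.primesLE k).filter (fun p => k < p * p), digitWeight 0 p k := by
  rw [mainTerm, Nat.primesLE, Nat.primesBelow, filter_filter]
  exact log_prod fun p hp => (div_sub_digit_pos 0 k (mem_filter.1 hp).2.1.pos).ne'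

lemma filter_primesLE_not_lt_mul_self (k : ℕ) :
    (Nat.primesLE k).filter (fun p => ¬ k < p * p) = Nat.primesLE (Nat.sqrt k) := by
  ext p
  simp only [mem_filter, Nat.mem_primesLE, not_lt, ← Nat.le_sqrt]
  exact ⟨fun h => ⟨h.2, h.1.2⟩, fun h => ⟨⟨h.1.trans (Nat.sqrt_le_self k), h.2⟩, h.1⟩⟩

lemma log_ghat_sub_log_mainTerm_eq (k : ℕ) :
    log (ghat k : ℝ) - log (mainTerm k) =
      ∑ p ∈ Nat.primesLE (Nat.sqrt k), digitWeight 0 p k +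
        ∑ p ∈ Nat.primesLE k, ∑ i ∈ range (Nat.log p k), digitWeight (i + 1) p k := by
  rw [log_ghat_eq_sum, log_mainTerm_eq_sum, ← filter_primesLE_not_lt_mul_self]
  simp only [sum_range_succ', sum_add_distrib]
  linarith [sum_filter_add_sum_filter_not (Nat.primesLE k) (fun p => k < p * p) (digitWeight 0 · k)]

lemma sum_log_sub_one_mul_log_eq_psi_sub_theta (n : ℕ) :
    ∑ p ∈ Nat.primesLE n, ((Nat.log p n : ℝ) - 1) * log p = ψ n - θ n := by
  simp only [sub_one_mul, sum_sub_distrib, psi_eq_sum_mul_log_prime, theta_eq_sum_primesLE_log]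

lemma sum_digitWeight_le_theta (i k n : ℕ) : ∑ p ∈ Nat.primesLE n, digitWeight i p k ≤ θ n := by
  rw [theta_eq_sum_primesLE_log]
  exact sum_le_sum fun p hp => digitWeight_le_log i k (Nat.prime_of_mem_primesLE hp).pos

lemma sum_digitWeight_one_sqrt_lt_le (k : ℕ) :
    ∑ p ∈ (Nat.primesLE k).filter (Nat.sqrt (4 * k) < ·), digitWeight 1 p k ≤
      4 * k / 3 * (2 / (Nat.sqrt (4 * k) + 1)) := by
  set N := Nat.sqrt (4 * k)
  calc _ ≤ ∑ p ∈ (Nat.primesLE k).filter (N < ·), 4 * k / 3 * ((p : ℝ) ^ 2)⁻¹ := by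
        refine sum_le_sum fun p hp => ?_
        simp only [mem_filter, Nat.mem_primesLE] at hp
        calc _ ≤ (4 * k / (3 * p ^ 2) : ℝ) :=
              digitWeight_one_le k hp.1.2.pos (Nat.sqrt_lt.1 hp.2).le
          _ = _ := by ring
    _ ≤ ∑ n ∈ Ioo N (k + 1), 4 * k / 3 * ((n : ℝ) ^ 2)⁻¹ := by
        refine sum_le_sum_of_subset_of_nonneg (fun p hp => ?_) fun n _ _ => by positivity
        simp only [mem_filter, Nat.mem_primesLE, mem_Ioo] at hp ⊢
        omega
    _ = 4 * k / 3 * ∑ n ∈ Ioo N (k + 1), ((n : ℝ) ^ 2)⁻¹ := (mul_sum ..).symm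
    _ ≤ 4 * k / 3 * (2 / (N + 1)) := by gcongr; exact sum_Ioo_inv_sq_le N (k + 1)

lemma sum_digitWeight_one_le (k : ℕ) :
    ∑ p ∈ Nat.primesLE k, digitWeight 1 p k ≤ (2 * log 4 + 4 / 3) * √k := by
  set N := Nat.sqrt (4 * k)
  have hsqrt : √((4 * k : ℕ) : ℝ) = 2 * √k := by
    push_cast
    rw [sqrt_mul (by norm_num), show (4 : ℝ) = 2 ^ 2 by norm_num, sqrt_sq (by norm_num)]
  have hN : (N : ℝ) ≤ 2 * √k := hsqrt ▸ Real.nat_sqrt_le_real_sqrt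
  have hN' : 2 * √k ≤ N + 1 := hsqrt ▸ Real.real_sqrt_le_nat_sqrt_succ
  have hsmall : ∑ p ∈ (Nat.primesLE k).filter (· ≤ N), digitWeight 1 p k ≤ log 4 * (2 * √k) :=
    calc _ ≤ ∑ p ∈ Nat.primesLE N, digitWeight 1 p k := by
          refine sum_le_sum_of_subset_of_nonneg (fun p hp => ?_) fun p hp _ =>
            digitWeight_nonneg 1 k (Nat.prime_of_mem_primesLE hp).pos
          simp only [mem_filter, Nat.mem_primesLE] at hp ⊢
          exact ⟨hp.2, hp.1.2⟩
      _ ≤ θ N := sum_digitWeight_le_theta 1 k N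
      _ ≤ log 4 * N := theta_le_log4_mul_x N.cast_nonneg
      _ ≤ log 4 * (2 * √k) := by gcongr
  have htail : 4 * k / 3 * (2 / (N + 1)) ≤ 4 / 3 * √k := by
    rw [mul_div_assoc', div_le_iff₀ (by positivity)]
    nlinarith [mul_le_mul_of_nonneg_left hN' (sqrt_nonneg (k : ℝ)),
      sq_sqrt (Nat.cast_nonneg (α := ℝ) k)]
  rw [← sum_filter_add_sum_filter_not _ (· ≤ N)]
  simp only [not_le]
  linarith [sum_digitWeight_one_sqrt_lt_le k]

lemma log_ghat_sub_log_mainTerm_nonneg (k : ℕ) :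
    0 ≤ log (ghat k : ℝ) - log (mainTerm k) := by
  rw [log_ghat_sub_log_mainTerm_eq]
  refine add_nonneg (sum_nonneg fun p hp => ?_) (sum_nonneg fun p hp => sum_nonneg fun i _ => ?_)
  all_goals exact digitWeight_nonneg _ k (Nat.prime_of_mem_primesLE hp).pos

lemma log_ghat_sub_log_mainTerm_le (k : ℕ) :
    log (ghat k : ℝ) - log (mainTerm k) ≤ (3 * log 4 + 4 / 3) * √k + (ψ k - θ k) := by
  have hsmall : ∑ p ∈ Nat.primesLE (Nat.sqrt k), digitWeight 0 p k ≤ log 4 * √k :=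
    calc _ ≤ θ (Nat.sqrt k) := sum_digitWeight_le_theta 0 k _
      _ ≤ log 4 * Nat.sqrt k := theta_le_log4_mul_x (Nat.cast_nonneg _)
      _ ≤ log 4 * √k := by gcongr; exact Real.nat_sqrt_le_real_sqrt
  have hhigh : ∑ p ∈ Nat.primesLE k, ∑ i ∈ range (Nat.log p k), digitWeight (i + 1) p k ≤
      ∑ p ∈ Nat.primesLE k, (digitWeight 1 p k + ((Nat.log p k : ℝ) - 1) * log p) :=
    sum_le_sum fun p hp => sum_digitWeight_succ_le k (Nat.prime_of_mem_primesLE hp).one_lt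
      (Nat.le_of_mem_primesLE hp)
  rw [sum_add_distrib, sum_log_sub_one_mul_log_eq_psi_sub_theta] at hhigh
  rw [log_ghat_sub_log_mainTerm_eq]
  linarith [sum_digitWeight_one_le k]

lemma isBigO_sqrt_mul_log_log :
    (fun k : ℕ => √k) =O[atTop] (fun k : ℕ => √k * log (log k)) := by
  have h : Tendsto (fun k : ℕ => log (log k)) atTop atTop :=
    tendsto_log_atTop.comp (tendsto_log_atTop.comp tendsto_natCast_atTop_atTop)
  simpa using (isBigO_refl (fun k : ℕ => √k) atTop).mul
    (isLittleO_one_left_iff (F := ℝ) |>.2 (tendsto_norm_atTop_atTop.comp h)).isBigO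

/-- `log ĝ(k) − log ∏_{√k < p ≤ k} p/(p − a_{0,p}(k)) = O(√k · log log k)`.
Here `√k < p` is expressed as `k < p * p`. -/
theorem log_ghat_sub_main_term :
    (fun k : ℕ => Real.log ((ghat k : ℝ)) -
        Real.log (∏ p ∈ (Finset.range (k + 1)).filter (fun p => p.Prime ∧ k < p * p),
          (p : ℝ) / (p - digit 0 p k)))
      =O[atTop] (fun k : ℕ => Real.sqrt k * Real.log (Real.log k)) := by
  change (fun k : ℕ => log (ghat k : ℝ) - log (mainTerm k)) =O[atTop] _
  obtain ⟨C, hC⟩ := psi_sub_theta_le_mul_sqrt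
  refine IsBigO.trans ?_ isBigO_sqrt_mul_log_log
  refine IsBigO.of_bound (3 * log 4 + 4 / 3 + C) (Eventually.of_forall fun k => ?_)
  rw [norm_of_nonneg (log_ghat_sub_log_mainTerm_nonneg k), norm_of_nonneg (sqrt_nonneg _)]
  linarith [log_ghat_sub_log_mainTerm_le k, hC k]
end

section
/- As the integer k → ∞, log ∏_{√k < p ≤ 2√k, p prime} p/(p − a_{1,p}(k)) = O(√k). -/
open Finset Filter Real Asymptotics

/-- `log ∏_{√k < p ≤ 2√k} p/(p − a_{1,p}(k)) = O(√k)`.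
Here `√k < p ≤ 2√k` is expressed as `k < p * p ∧ p * p ≤ 4 * k`. -/
theorem lower_middle_product_bound :
    (fun k : ℕ =>
        Real.log (∏ p ∈ (Finset.range (k + 1)).filter
            (fun p => p.Prime ∧ k < p * p ∧ p * p ≤ 4 * k),
          (p : ℝ) / (p - digit 1 p k)))
      =O[atTop] (fun k : ℕ => Real.sqrt k) := by
  rw [Asymptotics.isBigO_iff]
  refine ⟨2 * Real.log 4, Filter.Eventually.of_forall fun k => ?_⟩
  set S := (Finset.range (k + 1)).filter
      (fun p => p.Prime ∧ k < p * p ∧ p * p ≤ 4 * k) with hS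
  have hfac : ∀ p ∈ S, (1 : ℝ) ≤ (p : ℝ) / (p - digit 1 p k) ∧
      (p : ℝ) / (p - digit 1 p k) ≤ (p : ℝ) := by
    intro p hp
    obtain ⟨-, hprime, -, -⟩ := Finset.mem_filter.mp hp
    have hd : digit 1 p k < p := Nat.mod_lt _ hprime.pos
    have hd1 : (1 : ℝ) ≤ (p : ℝ) - digit 1 p k := by
      have : (digit 1 p k : ℝ) + 1 ≤ p := by exact_mod_cast hd
      linarith
    constructor
    · rw [le_div_iff₀ (by linarith), one_mul]
      have : (0 : ℝ) ≤ digit 1 p k := Nat.cast_nonneg _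
      linarith
    · exact div_le_self (Nat.cast_nonneg _) hd1
  have hprod1 : (1 : ℝ) ≤ ∏ p ∈ S, (p : ℝ) / (p - digit 1 p k) := by
    have := Finset.prod_le_prod (s := S) (f := fun _ => (1 : ℝ))
      (g := fun p : ℕ => (p : ℝ) / (p - digit 1 p k)) (fun _ _ => zero_le_one)
      (fun p hp => (hfac p hp).1)
    simpa using this
  have hle : (∏ p ∈ S, (p : ℝ) / (p - digit 1 p k)) ≤ ∏ p ∈ S, (p : ℝ) :=
    Finset.prod_le_prod (fun p hp => by linarith [(hfac p hp).1]) fun p hp => (hfac p hp).2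
  set N := Nat.sqrt (4 * k) with hN
  have hsub : S ⊆ (Finset.range (N + 1)).filter Nat.Prime := by
    intro p hp
    obtain ⟨-, hprime, -, h2⟩ := Finset.mem_filter.mp hp
    exact Finset.mem_filter.mpr ⟨Finset.mem_range.mpr (Nat.lt_succ_of_le (Nat.le_sqrt.mpr h2)),
      hprime⟩
  have hle2n : (∏ p ∈ S, p) ≤ primorial N := by
    rw [primorial]
    exact Finset.prod_le_prod_of_subset_of_one_le' hsub
      (fun p hp _ => (Finset.mem_filter.mp hp).2.one_lt.le)
  have hprim : (∏ p ∈ S, (p : ℝ)) ≤ (4 : ℝ) ^ N := by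
    rw [← Nat.cast_prod]
    exact_mod_cast hle2n.trans (primorial_le_4_pow N)
  have hlog : Real.log (∏ p ∈ S, (p : ℝ) / (p - digit 1 p k)) ≤ N * Real.log 4 := by
    calc Real.log (∏ p ∈ S, (p : ℝ) / (p - digit 1 p k))
        ≤ Real.log ((4 : ℝ) ^ N) :=
          Real.log_le_log (by linarith) (by linarith)
      _ = N * Real.log 4 := by rw [Real.log_pow]
  have hNle : (N : ℝ) ≤ 2 * Real.sqrt k := by
    have h1 : (N : ℝ) ≤ Real.sqrt ((4 * k : ℕ) : ℝ) := Real.nat_sqrt_le_real_sqrt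
    have h2 : Real.sqrt ((4 : ℝ) * k) = 2 * Real.sqrt k := by
      rw [show (4 : ℝ) * k = 2 ^ 2 * k by ring, Real.sqrt_mul (by positivity),
        Real.sqrt_sq (by norm_num)]
    calc (N : ℝ) ≤ Real.sqrt ((4 * k : ℕ) : ℝ) := h1
      _ = 2 * Real.sqrt k := by push_cast; rw [h2]
  have hlog0 : 0 ≤ Real.log (∏ p ∈ S, (p : ℝ) / (p - digit 1 p k)) :=
    Real.log_nonneg hprod1
  rw [Real.norm_eq_abs, Real.norm_eq_abs, abs_of_nonneg hlog0,
    abs_of_nonneg (Real.sqrt_nonneg _)]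
  have hlog4 : 0 ≤ Real.log 4 := Real.log_nonneg (by norm_num)
  calc Real.log (∏ p ∈ S, (p : ℝ) / (p - digit 1 p k)) ≤ N * Real.log 4 := hlog
    _ ≤ 2 * Real.sqrt k * Real.log 4 := by nlinarith [Real.sqrt_nonneg (k:ℝ)]
    _ = 2 * Real.log 4 * Real.sqrt k := by ring
end

section
/- As the integer k → ∞, log ∏_{2√k < p ≤ k, p prime} p/(p − a_{1,p}(k)) = O(√k · log log k). -/
/-!
For `p² > 4k` the digit `a = ⌊k/p⌋` is below `p/4`, so
`log (p/(p - a)) ≤ a/(p - a) ≤ (4/3)·a/p ≤ (4/3)·k/p²`. All these primes exceed `√k`, and the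
tail `∑_{n > √k} 1/n²` is `O(1/√k)`, so the logarithm is in fact `O(√k)`; the factor
`log log k` only costs a constant once `log log k ≥ 1`.
-/

open Finset Filter Real Asymptotics

lemma digit_one_eq_div_of_lt_mul_self {p k : ℕ} (h : k < p * p) : digit 1 p k = k / p := by
  have hp : 0 < p := Nat.pos_of_ne_zero (by rintro rfl; simp at h)
  rw [digit, pow_one, Nat.mod_eq_of_lt ((Nat.div_lt_iff_lt_mul hp).mpr h)]

lemma four_mul_div_lt_of_four_mul_lt_mul_self {p k : ℕ} (h : 4 * k < p * p) : 4 * (k / p) < p :=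
  Nat.lt_of_mul_lt_mul_right <| calc
    4 * (k / p) * p = 4 * (k / p * p) := by ring
    _ ≤ 4 * k := Nat.mul_le_mul_left 4 (Nat.div_mul_le_self k p)
    _ < p * p := h

lemma log_div_sub_nonneg {x a : ℝ} (ha : 0 ≤ a) (hax : a < x) : 0 ≤ log (x / (x - a)) :=
  log_nonneg <| (one_le_div (by linarith)).mpr (by linarith)

lemma log_div_sub_le {x a : ℝ} (ha : 0 ≤ a) (hax : 4 * a ≤ x) (hx : 0 < x) :
    log (x / (x - a)) ≤ 4 / 3 * (a / x) := by
  have hxa : 0 < x - a := by linarith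
  calc log (x / (x - a)) ≤ x / (x - a) - 1 := log_le_sub_one_of_pos (by positivity)
    _ = a / (x - a) := by field_simp; ring
    _ ≤ 4 / 3 * (a / x) := by
      rw [div_le_iff₀ hxa, mul_div_assoc', div_mul_eq_mul_div, le_div_iff₀ hx]
      nlinarith

lemma log_div_sub_digit_le {p k : ℕ} (h : 4 * k < p * p) :
    log (p / (p - digit 1 p k)) ≤ 4 / 3 * (k * ((p : ℝ) ^ 2)⁻¹) := by
  have hp : (0 : ℝ) < p := by
    exact_mod_cast Nat.pos_of_ne_zero (by rintro rfl; simp at h)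
  have hdiv : 4 * ((k / p : ℕ) : ℝ) ≤ p := by
    exact_mod_cast (four_mul_div_lt_of_four_mul_lt_mul_self h).le
  have hdivp : ((k / p : ℕ) : ℝ) * p ≤ k := by exact_mod_cast Nat.div_mul_le_self k p
  rw [digit_one_eq_div_of_lt_mul_self (by omega)]
  refine (log_div_sub_le (Nat.cast_nonneg _) hdiv hp).trans ?_
  gcongr
  rw [← div_eq_mul_inv, pow_two, ← div_div, div_le_div_iff_of_pos_right hp, le_div_iff₀ hp]
  exact hdivp

lemma sum_inv_sq_le_of_forall_lt (S : Finset ℕ) {m : ℕ} (h : ∀ n ∈ S, m < n) :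
    ∑ n ∈ S, ((n : ℝ) ^ 2)⁻¹ ≤ 2 / (m + 1) := by
  refine le_trans ?_ (sum_Ioo_inv_sq_le m (S.sup id + 1))
  refine sum_le_sum_of_subset_of_nonneg (fun n hn => mem_Ioo.mpr ⟨h n hn, ?_⟩)
    (fun _ _ _ => by positivity)
  exact Nat.lt_succ_of_le (le_sup (f := id) hn)

lemma div_nat_sqrt_succ_le_sqrt (k : ℕ) : (k : ℝ) / (Nat.sqrt k + 1) ≤ √k := by
  rw [div_le_iff₀ (by positivity)]
  calc (k : ℝ) = √k * √k := (mul_self_sqrt k.cast_nonneg).symm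
    _ ≤ √k * (Nat.sqrt k + 1) :=
      mul_le_mul_of_nonneg_left Real.real_sqrt_lt_nat_sqrt_succ.le (sqrt_nonneg _)

lemma log_upper_middle_product_mem_Icc (k : ℕ) :
    log (∏ p ∈ (range (k + 1)).filter (fun p => p.Prime ∧ 4 * k < p * p),
      (p : ℝ) / (p - digit 1 p k)) ∈ Set.Icc 0 (8 / 3 * √k) := by
  set S := (range (k + 1)).filter (fun p => p.Prime ∧ 4 * k < p * p)
  have hS : ∀ p ∈ S, 4 * k < p * p := fun p hp => (mem_filter.mp hp).2.2
  have hdigit_lt : ∀ p ∈ S, (digit 1 p k : ℝ) < p := fun p hp => by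
    exact_mod_cast Nat.mod_lt _ (mem_filter.mp hp).2.1.pos
  rw [log_prod fun p hp => (div_pos ((Nat.cast_nonneg _).trans_lt (hdigit_lt p hp))
    (sub_pos.mpr (hdigit_lt p hp))).ne']
  refine ⟨sum_nonneg fun p hp => log_div_sub_nonneg (Nat.cast_nonneg _) (hdigit_lt p hp), ?_⟩
  have hsqrt_lt : ∀ p ∈ S, Nat.sqrt k < p := fun p hp =>
    Nat.sqrt_lt'.mpr (by rw [pow_two]; linarith [hS p hp])
  calc ∑ p ∈ S, log (p / (p - digit 1 p k))
      ≤ ∑ p ∈ S, 4 / 3 * (k * ((p : ℝ) ^ 2)⁻¹) :=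
        sum_le_sum fun p hp => log_div_sub_digit_le (hS p hp)
    _ = 4 / 3 * k * ∑ p ∈ S, ((p : ℝ) ^ 2)⁻¹ := by
        rw [mul_sum]; exact sum_congr rfl fun _ _ => by ring
    _ ≤ 4 / 3 * k * (2 / (Nat.sqrt k + 1)) := by
        gcongr; exact sum_inv_sq_le_of_forall_lt S hsqrt_lt
    _ = 8 / 3 * (k / (Nat.sqrt k + 1)) := by ring
    _ ≤ 8 / 3 * √k := by gcongr; exact div_nat_sqrt_succ_le_sqrt k

lemma one_isBigO_log_log_natCast : (fun _ : ℕ => (1 : ℝ)) =O[atTop] fun k : ℕ => log (log k) := by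
  have htendsto : Tendsto (fun k : ℕ => log (log k)) atTop atTop :=
    tendsto_log_atTop.comp (tendsto_log_atTop.comp tendsto_natCast_atTop_atTop)
  refine IsBigO.of_bound 1 ?_
  filter_upwards [htendsto.eventually_ge_atTop 1] with k hk
  rw [norm_one, one_mul, norm_of_nonneg (by linarith)]
  exact hk

/-- `log ∏_{2√k < p ≤ k} p/(p − a_{1,p}(k)) = O(√k · log log k)`.
Here `2√k < p` is expressed as `4 * k < p * p`. -/
theorem upper_middle_product_bound :
    (fun k : ℕ =>
        Real.log (∏ p ∈ (Finset.range (k + 1)).filter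
            (fun p => p.Prime ∧ 4 * k < p * p),
          (p : ℝ) / (p - digit 1 p k)))
      =O[atTop] (fun k : ℕ => Real.sqrt k * Real.log (Real.log k)) := by
  have hsqrt : (fun k : ℕ =>
      log (∏ p ∈ (range (k + 1)).filter (fun p => p.Prime ∧ 4 * k < p * p),
        (p : ℝ) / (p - digit 1 p k))) =O[atTop] fun k : ℕ => √k := by
    refine IsBigO.of_bound (8 / 3) (Eventually.of_forall fun k => ?_)
    obtain ⟨hnonneg, hle⟩ := log_upper_middle_product_mem_Icc k
    rwa [norm_of_nonneg hnonneg, norm_of_nonneg (sqrt_nonneg _)]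
  have hloglog := (isBigO_refl (fun k : ℕ => √k) atTop).mul one_isBigO_log_log_natCast
  simp only [mul_one] at hloglog
  exact hsqrt.trans hloglog
end

section
/- As the integer k → ∞, the double sum Σ_{a = ⌈(log k)^2⌉}^{⌊√k⌋} Σ_{k/(a+1) < p ≤ k/a, p prime} ( log p − log((a+1)p − k) ) is O(k/(log k)^2). (Each term is nonnegative, since k/(a+1) < p ≤ k/a implies 0 < (a+1)p − k ≤ p.) -/
/-!
With `r = (a + 1) p - k`, the integers `p ∈ (k/(a+1), k/a]` give `r = r₀, r₀ + (a + 1), …` with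
`r₀ ≥ 1`, so the inner sum is at most `∑_{j<n} (log (k/a) - log (1 + j(a + 1)))
≤ log (k/a) + log (xⁿ / n!)` where `x = k/(a(a + 1))`; since `xⁿ / n! ≤ eˣ` this is at most
`log k + k/(a(a + 1))`. Summing over `a ≤ √k` and telescoping `∑_{a ≥ A} 1/(a(a + 1)) ≤ 1/A`
with `A ≥ (log k)²` bounds the double sum by `√k log k + k/(log k)²`,
and `√k log k = O(k/(log k)²)`.
-/

open Finset Filter Real Asymptotics
open scoped Nat

lemma sum_range_log_sub_log_succ_le {x : ℝ} (hx : 0 < x) (n : ℕ) :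
    ∑ j ∈ range n, (log x - log (j + 1)) ≤ x := by
  have hprod : ∑ j ∈ range n, (log x - log (j + 1)) = log (x ^ n / n !) := by
    rw [log_div (by positivity) (by positivity), log_pow, sum_sub_distrib, sum_const, card_range,
      nsmul_eq_mul, ← prod_range_add_one_eq_factorial, Nat.cast_prod,
      log_prod (fun j _ => by positivity)]
    push_cast
    rfl
  rw [hprod, log_le_iff_le_exp (by positivity)]
  exact pow_div_factorial_le_exp _ hx.le n

lemma sum_range_log_sub_log_one_add_mul_le {M d : ℝ} (hM : 1 ≤ M) (hd : 0 < d) (n : ℕ) :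
    ∑ j ∈ range n, (log M - log (1 + j * d)) ≤ log M + M / d := by
  have hlogM : 0 ≤ log M := log_nonneg hM
  cases n with
  | zero => simp only [range_zero, sum_empty]; positivity
  | succ n =>
    rw [sum_range_succ', Nat.cast_zero, zero_mul, add_zero, log_one, sub_zero, add_comm]
    gcongr
    calc ∑ j ∈ range n, (log M - log (1 + ((j + 1 : ℕ) : ℝ) * d))
        ≤ ∑ j ∈ range n, (log (M / d) - log (j + 1)) := by
          refine sum_le_sum fun j _ => ?_
          have hsplit : log (M / d) - log (j + 1) = log M - log ((j + 1) * d) := by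
            rw [log_div (by positivity) hd.ne', log_mul (by positivity) hd.ne']; ring
          rw [hsplit]
          gcongr
          push_cast; linarith
      _ ≤ M / d := sum_range_log_sub_log_succ_le (by positivity) n

lemma sum_Icc_one_div_mul_add_one_le {A : ℕ} (hA : 0 < A) (B : ℕ) :
    ∑ a ∈ Icc A B, (1 : ℝ) / (a * (a + 1)) ≤ 1 / A := by
  rcases lt_or_ge B A with hBA | hAB
  · rw [Icc_eq_empty_of_lt hBA, sum_empty]; positivity
  have hterm : ∀ a ∈ Icc A B,
      (1 : ℝ) / (a * (a + 1)) = -1 / ((a + 1 : ℕ) : ℝ) - -1 / (a : ℝ) := by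
    intro a ha
    have : (0 : ℝ) < a := by exact_mod_cast hA.trans_le (mem_Icc.1 ha).1
    push_cast
    field_simp
    ring
  rw [sum_congr rfl hterm, sum_Icc_sub hAB (fun a : ℕ => (-1 : ℝ) / a), neg_div, neg_div]
  have : (0 : ℝ) ≤ 1 / ((B + 1 : ℕ) : ℝ) := by positivity
  linarith

noncomputable def tailTerm (k a p : ℕ) : ℝ := log p - log ((a + 1 : ℝ) * p - k)

section tailTerm

variable {k a p : ℕ}

lemma tailTerm_nonneg (hlt : k < p * (a + 1)) (hle : p * a ≤ k) : 0 ≤ tailTerm k a p := by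
  have hlt' : (k : ℝ) < p * (a + 1) := by exact_mod_cast hlt
  have hle' : (p : ℝ) * a ≤ k := by exact_mod_cast hle
  rw [tailTerm, sub_nonneg]
  exact log_le_log (by linarith) (by linarith)

lemma tailTerm_le {u : ℝ} (ha : 0 < a) (hle : p * a ≤ k) (hu : 0 < u)
    (hur : u ≤ (a + 1 : ℝ) * p - k) : tailTerm k a p ≤ log (k / a) - log u := by
  have hp : (p : ℝ) ≤ k / a := by
    rw [le_div_iff₀ (by exact_mod_cast ha)]; exact_mod_cast hle
  have hp0 : (0 : ℝ) < p :=
    pos_of_mul_pos_right (by linarith [k.cast_nonneg (α := ℝ)] : (0 : ℝ) < (a + 1) * p)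
      (by positivity)
  rw [tailTerm]
  gcongr

lemma mem_Ioc_div_iff (ha : 0 < a) :
    p ∈ Ioc (k / (a + 1)) (k / a) ↔ k < p * (a + 1) ∧ p * a ≤ k := by
  rw [mem_Ioc, Nat.div_lt_iff_lt_mul (by omega), Nat.le_div_iff_mul_le ha]

lemma sum_tailTerm_le (ha : 0 < a) (hak : a ≤ k) (s : Finset ℕ)
    (hs : ∀ p ∈ s, k < p * (a + 1) ∧ p * a ≤ k) :
    ∑ p ∈ s, tailTerm k a p ≤ log (k / a) + k / (a * (a + 1)) := by
  set c := k / (a + 1) + 1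
  have hc : k + 1 ≤ c * (a + 1) := (Nat.div_lt_iff_lt_mul (by omega)).1 (Nat.lt_succ_self _)
  calc ∑ p ∈ s, tailTerm k a p ≤ ∑ p ∈ Ioc (k / (a + 1)) (k / a), tailTerm k a p :=
        sum_le_sum_of_subset_of_nonneg (fun p hp => (mem_Ioc_div_iff ha).2 (hs p hp))
          fun p hp _ => tailTerm_nonneg ((mem_Ioc_div_iff ha).1 hp).1 ((mem_Ioc_div_iff ha).1 hp).2
    _ = ∑ j ∈ range (k / a - k / (a + 1)), tailTerm k a (c + j) := by
        rw [← Ico_add_one_add_one_eq_Ioc, sum_Ico_eq_sum_range, Nat.add_sub_add_right]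
    _ ≤ ∑ j ∈ range (k / a - k / (a + 1)), (log (k / a) - log (1 + j * (a + 1))) := by
        refine sum_le_sum fun j hj => tailTerm_le ha ?_ (by positivity) ?_
        · exact (Nat.le_div_iff_mul_le ha).1 (by rw [mem_range] at hj; omega)
        · have hc' : ((k + 1 : ℕ) : ℝ) ≤ (c * (a + 1) : ℕ) := by exact_mod_cast hc
          push_cast at hc' ⊢
          linear_combination hc'
    _ ≤ log (k / a) + k / a / (a + 1) :=
        sum_range_log_sub_log_one_add_mul_le
          ((one_le_div (by exact_mod_cast ha)).2 (by exact_mod_cast hak)) (by positivity) _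
    _ = log (k / a) + k / (a * (a + 1)) := by rw [div_div]

end tailTerm

noncomputable def tailSum (k : ℕ) : ℝ :=
  ∑ a ∈ Icc ⌈log k ^ 2⌉₊ ⌊√k⌋₊,
    ∑ p ∈ (range (k + 1)).filter (fun p => p.Prime ∧ k < p * (a + 1) ∧ p * a ≤ k), tailTerm k a p

lemma tailSum_nonneg (k : ℕ) : 0 ≤ tailSum k :=
  sum_nonneg fun _ _ => sum_nonneg fun _ hp =>
    tailTerm_nonneg (mem_filter.1 hp).2.2.1 (mem_filter.1 hp).2.2.2

lemma tailSum_le {k : ℕ} (hk : 2 ≤ k) : tailSum k ≤ √k * log k + k / log k ^ 2 := by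
  set A := ⌈log k ^ 2⌉₊
  set B := ⌊√k⌋₊
  have hk1 : (1 : ℝ) < k := by exact_mod_cast hk
  have hlog : 0 < log k := log_pos hk1
  have hA : 0 < A := Nat.ceil_pos.2 (by positivity)
  have hBk : B ≤ k := Nat.floor_le_of_le (sqrt_le_self_iff.2 (Or.inr hk1.le))
  have hcard : (#(Icc A B) : ℝ) ≤ √k := by
    calc (#(Icc A B) : ℝ) ≤ B := by rw [Nat.card_Icc]; exact_mod_cast (by omega : B + 1 - A ≤ B)
      _ ≤ √k := Nat.floor_le (sqrt_nonneg _)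
  calc tailSum k ≤ ∑ a ∈ Icc A B, (log k + k * (1 / (a * (a + 1)))) := by
        refine sum_le_sum fun a ha => ?_
        have ha0 : 0 < a := hA.trans_le (mem_Icc.1 ha).1
        refine (sum_tailTerm_le ha0 ((mem_Icc.1 ha).2.trans hBk) _
          fun p hp => (mem_filter.1 hp).2.2).trans ?_
        rw [mul_one_div]
        gcongr
        exact div_le_self k.cast_nonneg (Nat.one_le_cast.2 ha0)
    _ = #(Icc A B) * log k + k * ∑ a ∈ Icc A B, 1 / ((a : ℝ) * (a + 1)) := by
        rw [sum_add_distrib, sum_const, nsmul_eq_mul, mul_sum]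
    _ ≤ √k * log k + k * (1 / log k ^ 2) := by
        gcongr
        exact (sum_Icc_one_div_mul_add_one_le hA B).trans
          (one_div_le_one_div_of_le (by positivity) (Nat.le_ceil _))
    _ = √k * log k + k / log k ^ 2 := by rw [mul_one_div]

lemma isBigO_sqrt_mul_log : (fun x : ℝ => √x * log x) =O[atTop] (fun x => x / log x ^ 2) := by
  have h := (isLittleO_log_rpow_rpow_atTop 3 (by norm_num : (0 : ℝ) < 1 / 2)).isBigO.mul
    (isBigO_refl (fun x => √x / log x ^ 2) atTop)
  refine h.congr' ?_ ?_ <;> filter_upwards [eventually_gt_atTop 1] with x hx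
  · have : log x ≠ 0 := (log_pos hx).ne'
    simp only [rpow_ofNat]
    field_simp
  · rw [← sqrt_eq_rpow, ← mul_div_assoc, mul_self_sqrt (by linarith)]

/-- `Σ_{a=⌈(log k)²⌉}^{⌊√k⌋} Σ_{k/(a+1) < p ≤ k/a, p prime} (log p − log((a+1)p − k))
= O(k/(log k)²)`. Here `k/(a+1) < p ≤ k/a` is expressed as
`k < p * (a+1) ∧ p * a ≤ k`. -/
theorem large_a_tail_bound :
    (fun k : ℕ =>
        ∑ a ∈ Finset.Icc ⌈(Real.log k) ^ 2⌉₊ ⌊Real.sqrt k⌋₊,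
          ∑ p ∈ (Finset.range (k + 1)).filter
              (fun p => p.Prime ∧ k < p * (a + 1) ∧ p * a ≤ k),
            (Real.log p - Real.log ((a + 1 : ℝ) * p - k)))
      =O[atTop] (fun k : ℕ => (k : ℝ) / (Real.log k) ^ 2) := by
  have hbound : (fun k : ℕ => tailSum k) =O[atTop] (fun k : ℕ => √k * log k + k / log k ^ 2) :=
    IsBigO.of_bound' <| eventually_atTop.2 ⟨2, fun k hk => by
      rw [norm_of_nonneg (tailSum_nonneg k)]
      exact (tailSum_le hk).trans (le_norm_self _)⟩
  exact hbound.trans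
    ((isBigO_sqrt_mul_log.comp_tendsto tendsto_natCast_atTop_atTop).add (isBigO_refl _ _))
end
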